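/- arXiv:2209.12781 — 3 statements merged into one kernel-verified Lean document; each statement's English description precedes it below -/
import Mathlib

section
/- For the random walk with p_c = ρ/(c+ρ), q_c = c/(c+ρ), the excursion above level c started at c+1 reaches height at least h+1 above c with probability 1/∑_{r=0}^{h} (c+1)_r/ρ^r, where (x)_r denotes the rising factorial. -/
/-! The hitting probability `f` is harmonic for the walk, so its increments satisfy
`p_b (f(b+1) - f b) = q_b (f b - f(b-1))`. Hence the increment above `c + k` is
`∏_{j=1}^k (q/p)(c+j)` times the first increment `f (c+1)`, and summing the increments from `c`
to `c + h + 1` gives `1 = f (c+1) ∑_r ∏_{j=1}^r (q/p)(c+j)`. For `q_b / p_b = b / ρ` these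
products are `(c+1)_r / ρ^r`. -/

/-- Rising factorial `(x)_n = x(x+1)⋯(x+n-1)` over the reals. -/
def risingFactorial (x : ℝ) (n : ℕ) : ℝ := ∏ i ∈ Finset.range n, (x + i)

open Finset

namespace BirthDeath

/-- The increment `s (ℓ+k+1) - s (ℓ+k)` of the scale function of the chain with up/down
probabilities `p`, `q`, normalized so that `s (ℓ+1) - s ℓ = 1`. -/
noncomputable def scaleIncrement (p q : ℕ → ℝ) (ℓ k : ℕ) : ℝ :=
  ∏ j ∈ range k, q (ℓ + j + 1) / p (ℓ + j + 1)

variable {p q f : ℕ → ℝ} {ℓ n : ℕ}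

theorem sub_eq_of_harmonic {b : ℕ} (hp : p b ≠ 0) (hpq : p b + q b = 1)
    (hf : f b = p b * f (b + 1) + q b * f (b - 1)) :
    f (b + 1) - f b = q b / p b * (f b - f (b - 1)) := by
  field_simp
  linear_combination -hf - f b * hpq

theorem increment_eq_scaleIncrement_mul (hp : ∀ b, p b ≠ 0) (hpq : ∀ b, p b + q b = 1)
    (hf : ∀ b, ℓ < b → b < ℓ + n + 1 → f b = p b * f (b + 1) + q b * f (b - 1))
    {k : ℕ} (hk : k ≤ n) :
    f (ℓ + k + 1) - f (ℓ + k) = scaleIncrement p q ℓ k * (f (ℓ + 1) - f ℓ) := by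
  induction k with
  | zero => simp [scaleIncrement]
  | succ k ih =>
    have hstep := sub_eq_of_harmonic (hp _) (hpq _)
      (hf (ℓ + k + 1) (by omega) (by omega))
    rw [Nat.add_sub_cancel, ih (by omega)] at hstep
    rw [scaleIncrement, prod_range_succ, ← add_assoc, hstep, scaleIncrement]
    ring

theorem sub_eq_sum_scaleIncrement_mul (hp : ∀ b, p b ≠ 0) (hpq : ∀ b, p b + q b = 1)
    (hf : ∀ b, ℓ < b → b < ℓ + n + 1 → f b = p b * f (b + 1) + q b * f (b - 1)) :
    f (ℓ + n + 1) - f ℓ = (∑ k ∈ range (n + 1), scaleIncrement p q ℓ k) * (f (ℓ + 1) - f ℓ) := by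
  calc f (ℓ + n + 1) - f ℓ = ∑ k ∈ range (n + 1), (f (ℓ + (k + 1)) - f (ℓ + k)) :=
        (sum_range_sub (fun k => f (ℓ + k)) (n + 1)).symm
    _ = ∑ k ∈ range (n + 1), scaleIncrement p q ℓ k * (f (ℓ + 1) - f ℓ) :=
        sum_congr rfl fun k hk =>
          increment_eq_scaleIncrement_mul hp hpq hf (Nat.lt_succ_iff.mp (mem_range.mp hk))
    _ = _ := (sum_mul ..).symm

/-- Gambler's ruin: the probability of reaching `ℓ + n + 1` before `ℓ` from `ℓ + 1`. -/
theorem hitting_prob_eq_inv_sum_scaleIncrement (hp : ∀ b, p b ≠ 0)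
    (hpq : ∀ b, p b + q b = 1) (hℓ : f ℓ = 0) (hu : f (ℓ + n + 1) = 1)
    (hf : ∀ b, ℓ < b → b < ℓ + n + 1 → f b = p b * f (b + 1) + q b * f (b - 1)) :
    f (ℓ + 1) = (∑ k ∈ range (n + 1), scaleIncrement p q ℓ k)⁻¹ := by
  have h := sub_eq_sum_scaleIncrement_mul hp hpq hf
  rw [hℓ, hu, sub_zero, sub_zero] at h
  exact eq_inv_of_mul_eq_one_left (by rw [mul_comm, ← h])

theorem scaleIncrement_eq_risingFactorial_div_pow {ρ : ℝ} (hρ : 0 < ρ) (c k : ℕ) :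
    scaleIncrement (fun b => ρ / (b + ρ)) (fun b => b / (b + ρ)) c k
      = risingFactorial ((c : ℝ) + 1) k / ρ ^ k := by
  rw [scaleIncrement, risingFactorial, pow_eq_prod_const, ← prod_div_distrib]
  refine prod_congr rfl fun j _ => ?_
  have : (0 : ℝ) < (c + j + 1 : ℕ) + ρ := by positivity
  field_simp
  push_cast
  ring

end BirthDeath

/-- The excursion above level `c` started at `c+1` reaches height at least `h+1`
with probability `1/∑_{r=0}^h (c+1)_r/ρ^r`.  The probability of hitting
`u = c+h+1` before `ℓ = c` is characterized by the harmonic equations of the walk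
with `p_b = ρ/(b+ρ)`, `q_b = b/(b+ρ)`. -/
theorem excursion_height (ρ : ℝ) (hρ : 0 < ρ) (c h : ℕ)
    (f : ℕ → ℝ) (hbl : f c = 0) (hbu : f (c + h + 1) = 1)
    (hhar : ∀ b : ℕ, c < b → b < c + h + 1 →
      f b = (ρ / (b + ρ)) * f (b + 1) + ((b : ℝ) / (b + ρ)) * f (b - 1)) :
    f (c + 1) = (∑ r ∈ Finset.range (h + 1), risingFactorial ((c : ℝ) + 1) r / ρ ^ r)⁻¹ := by
  have hp (b : ℕ) : ρ / (b + ρ) ≠ 0 := by positivity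
  have hpq (b : ℕ) : ρ / (b + ρ) + b / (b + ρ) = 1 := by
    rw [← add_div, add_comm, div_self (by positivity)]
  rw [BirthDeath.hitting_prob_eq_inv_sum_scaleIncrement hp hpq hbl hbu hhar]
  simp_rw [BirthDeath.scaleIncrement_eq_risingFactorial_div_pow hρ]
end

section
/- The mean measure tail of the scaled maximal cycle converges to θE_1(x): with m = ⌊x e^t⌋, θ∑_{k=m+1}^∞ (1−e^{-t})^k/k → θ∫_x^∞ (e^{-s}/s) ds as t → ∞, for each fixed x > 0. -/
/-! With `u = x e^t` we have `1 - e^{-t} = 1 - x/u` and `m = ⌊u⌋`. Integrating the geometric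
series termwise, the tail `∑_{k>m} q^k/k` equals `∫_0^q v^m/(1-v) dv`, and the substitution
`v = 1 - s/u` turns this into `∫_x^u (1 - s/u)^⌊u⌋ / s ds`. As `u → ∞` the integrand tends to
`e^{-s}/s` and, once `u ≥ 2`, is dominated by `e^{-s/2}/x`; dominated convergence gives `E_1(x)`. -/

open MeasureTheory Filter Real Set Topology

theorem tsum_pow_div_tail_eq_intervalIntegral {q : ℝ} (hq₀ : 0 ≤ q) (hq₁ : q < 1) (m : ℕ) :
    ∑' j : ℕ, q ^ (m + 1 + j) / ((m + 1 + j : ℕ) : ℝ) = ∫ v in 0..q, v ^ m / (1 - v) := by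
  have hsum : HasSum (fun j : ℕ => ∫ v in 0..q, v ^ (m + j)) (∫ v in 0..q, v ^ m / (1 - v)) := by
    refine intervalIntegral.hasSum_integral_of_dominated_convergence (fun j _ => q ^ (m + j))
      (fun j => (continuous_pow _).aestronglyMeasurable) (fun j => ?_) ?_
      intervalIntegrable_const ?_
    · filter_upwards with v hv
      rw [uIoc_of_le hq₀] at hv
      rw [norm_of_nonneg (pow_nonneg hv.1.le _)]
      exact pow_le_pow_left₀ hv.1.le hv.2 _
    · exact .of_forall fun v _ =>
        (summable_geometric_of_lt_one hq₀ hq₁).comp_injective (add_right_injective m)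
    · filter_upwards with v hv
      rw [uIoc_of_le hq₀] at hv
      simpa only [pow_add, div_eq_mul_inv] using
        (hasSum_geometric_of_lt_one hv.1.le (hv.2.trans_lt hq₁)).mul_left (v ^ m)
  rw [← hsum.tsum_eq]
  refine tsum_congr fun j => ?_
  rw [integral_pow]
  push_cast
  ring_nf

theorem intervalIntegral_pow_div_one_sub_eq {x u : ℝ} (hx : 0 < x) (hxu : x ≤ u) (m : ℕ) :
    ∫ v in 0..(1 - x / u), v ^ m / (1 - v) = ∫ s in x..u, (1 - s / u) ^ m / s := by
  have hu : 0 < u := hx.trans_le hxu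
  have hsub : ∫ s in x..u, (1 - s / u) ^ m / s
      = ∫ s in x..u, u⁻¹ • ((fun v => v ^ m / (1 - v)) (1 - u⁻¹ * s)) := by
    refine intervalIntegral.integral_congr fun s hs => ?_
    rw [uIcc_of_le hxu] at hs
    have hs₀ : s ≠ 0 := (hx.trans_le hs.1).ne'
    simp only [smul_eq_mul, sub_sub_cancel]
    field_simp
  rw [hsub, intervalIntegral.integral_smul,
    intervalIntegral.integral_comp_sub_mul (fun v => v ^ m / (1 - v)) (inv_ne_zero hu.ne'),
    smul_smul, inv_inv, inv_mul_cancel₀ hu.ne', one_smul, sub_self, inv_mul_eq_div]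

theorem one_sub_div_pow_floor_le_exp_neg_half {s u : ℝ} (hs : 0 ≤ s) (hsu : s ≤ u) (hu : 2 ≤ u) :
    (1 - s / u) ^ ⌊u⌋₊ ≤ exp (-(s / 2)) := by
  have hu₀ : 0 < u := by linarith
  have hfloor : u / 2 ≤ ⌊u⌋₊ := by linarith [Nat.sub_one_lt_floor u]
  calc (1 - s / u) ^ ⌊u⌋₊ ≤ exp (-(s / u)) ^ ⌊u⌋₊ :=
        pow_le_pow_left₀ (sub_nonneg.2 ((div_le_one hu₀).2 hsu)) (one_sub_le_exp_neg _) _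
    _ = exp (-(⌊u⌋₊ * (s / u))) := by rw [← exp_nat_mul, mul_neg]
    _ ≤ exp (-(s / 2)) := by
        gcongr
        calc s / 2 = u / 2 * (s / u) := by field_simp
          _ ≤ ⌊u⌋₊ * (s / u) := by gcongr

theorem tendsto_one_sub_div_pow_floor (s : ℝ) :
    Tendsto (fun u : ℝ => (1 - s / u) ^ ⌊u⌋₊) atTop (𝓝 (exp (-s))) := by
  have hlog : Tendsto (fun u : ℝ => (⌊u⌋₊ / u) * (u * log (1 + -s / u))) atTop (𝓝 (1 * -s)) :=
    tendsto_nat_floor_div_atTop.mul (tendsto_mul_log_one_add_div_atTop (-s))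
  rw [one_mul] at hlog
  refine ((continuous_exp.tendsto _).comp hlog).congr' ?_
  filter_upwards [eventually_gt_atTop 0, eventually_gt_atTop s] with u hu hsu
  have hpos : 0 < 1 + -s / u := by
    rw [neg_div, ← sub_eq_add_neg, sub_pos, div_lt_one hu]
    exact hsu
  have hcancel : ⌊u⌋₊ / u * (u * log (1 + -s / u)) = ⌊u⌋₊ * log (1 + -s / u) := by field_simp
  rw [Function.comp_apply, hcancel, exp_nat_mul, exp_log hpos, neg_div, ← sub_eq_add_neg]

theorem tendsto_setIntegral_indicator_one_sub_div_pow_floor {x : ℝ} (hx : 0 < x) :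
    Tendsto (fun u : ℝ => ∫ s in Ioi x, (Iic u).indicator (fun s => (1 - s / u) ^ ⌊u⌋₊ / s) s)
      atTop (𝓝 (∫ s in Ioi x, exp (-s) / s)) := by
  refine tendsto_integral_filter_of_dominated_convergence (fun s => exp (-(1 / 2) * s) / x)
    (.of_forall fun u => ((by fun_prop : Measurable fun s : ℝ => (1 - s / u) ^ ⌊u⌋₊ / s).indicator
      measurableSet_Iic).aestronglyMeasurable) ?_
    ((exp_neg_integrableOn_Ioi x one_half_pos).div_const x) ?_
  · filter_upwards [eventually_ge_atTop 2] with u hu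
    filter_upwards [self_mem_ae_restrict measurableSet_Ioi] with s (hxs : x < s)
    by_cases hsu : s ∈ Iic u
    · have hs : 0 < s := hx.trans hxs
      have hbase : 0 ≤ 1 - s / u := sub_nonneg.2 ((div_le_one (by linarith)).2 hsu)
      rw [indicator_of_mem hsu, norm_of_nonneg (div_nonneg (pow_nonneg hbase _) hs.le)]
      calc (1 - s / u) ^ ⌊u⌋₊ / s ≤ exp (-(s / 2)) / x :=
            div_le_div₀ (exp_pos _).le (one_sub_div_pow_floor_le_exp_neg_half hs.le hsu hu)
              hx hxs.le
        _ = exp (-(1 / 2) * s) / x := by ring_nf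
    · rw [indicator_of_notMem hsu, norm_zero]
      positivity
  · filter_upwards [self_mem_ae_restrict measurableSet_Ioi] with s (hxs : x < s)
    refine ((tendsto_one_sub_div_pow_floor s).div_const s).congr' ?_
    filter_upwards [eventually_ge_atTop s] with u (hsu : s ∈ Iic u)
    exact (indicator_of_mem hsu _).symm

theorem tendsto_tsum_pow_div_floor_tail {x : ℝ} (hx : 0 < x) :
    Tendsto (fun u : ℝ => ∑' j : ℕ, (1 - x / u) ^ (⌊u⌋₊ + 1 + j) / ((⌊u⌋₊ + 1 + j : ℕ) : ℝ))
      atTop (𝓝 (∫ s in Ioi x, exp (-s) / s)) := by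
  refine (tendsto_setIntegral_indicator_one_sub_div_pow_floor hx).congr' ?_
  filter_upwards [eventually_ge_atTop x] with u hxu
  have hu : 0 < u := hx.trans_le hxu
  rw [tsum_pow_div_tail_eq_intervalIntegral (sub_nonneg.2 ((div_le_one hu).2 hxu))
      (sub_lt_self _ (div_pos hx hu)),
    intervalIntegral_pow_div_one_sub_eq hx hxu, intervalIntegral.integral_of_le hxu,
    setIntegral_indicator measurableSet_Iic, Ioi_inter_Iic]

theorem mean_measure_tail_general (θ x : ℝ) (hx : 0 < x) :
    Filter.Tendsto
      (fun t : ℝ => θ * ∑' j : ℕ,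
        (1 - Real.exp (-t)) ^ (⌊x * Real.exp t⌋₊ + 1 + j)
          / ((⌊x * Real.exp t⌋₊ + 1 + j : ℕ) : ℝ))
      Filter.atTop
      (nhds (θ * ∫ s in Set.Ioi x, Real.exp (-s) / s)) := by
  have hscale : ∀ t, x / (x * exp t) = exp (-t) := fun t => by
    rw [exp_neg, div_mul_cancel_left₀ hx.ne']
  refine (((tendsto_tsum_pow_div_floor_tail hx).comp
    (tendsto_exp_atTop.const_mul_atTop hx)).const_mul θ).congr fun t => ?_
  simp only [Function.comp_apply, hscale]

/-- The mean measure tail of the scaled maximal cycle converges to `θ E_1(x)`: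
with `m = ⌊x e^t⌋`, `θ ∑_{k=m+1}^∞ (1-e^{-t})^k/k → θ ∫_x^∞ e^{-s}/s ds` as `t → ∞`. -/
theorem mean_measure_tail (θ x : ℝ) (hθ : 0 < θ) (hx : 0 < x) :
    Filter.Tendsto
      (fun t : ℝ => θ * ∑' j : ℕ,
        (1 - Real.exp (-t)) ^ (⌊x * Real.exp t⌋₊ + 1 + j)
          / ((⌊x * Real.exp t⌋₊ + 1 + j : ℕ) : ℝ))
      Filter.atTop
      (nhds (θ * ∫ s in Set.Ioi x, Real.exp (-s) / s)) :=
  mean_measure_tail_general θ x hx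
end

section
/- The correlation corr(L_j, L_k) = √(jk)·C(k−1,j)·C(k−1,j−1)·(2k−2j−1)!(2j−1)!/(2k−1)! satisfies corr(L_j, L_k) < (1/2)√(j/k) for all integers 1 ≤ j < k. -/
/-!
Put `n = k - 1`. Since `(2k-1)! = (2k-1) · C(2n, 2j-1) · (2j-1)! · (2k-2j-1)!` and
`√(jk) = k √(j/k)`, the bound is equivalent to `2k · C(n,j) C(n,j-1) < (2k-1) · C(2n, 2j-1)`.
In Vandermonde's convolution `C(2n, 2j-1) = ∑ C(n,a) C(n,b)` over `a + b = 2j-1`, the two terms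
`(a, b) = (j, j-1), (j-1, j)` alone contribute `2 C(n,j) C(n,j-1)`, and `2k < 2(2k-1)` for `k ≥ 2`.
-/

open Nat

theorem Nat.choose_mul_choose_add_choose_mul_choose_le (m n : ℕ) {r s : ℕ} (h : r ≠ s) :
    m.choose r * n.choose s + m.choose s * n.choose r ≤ (m + n).choose (r + s) := by
  rw [Nat.add_choose_eq, ← Finset.sum_pair (a := (r, s)) (b := (s, r))
    (f := fun p : ℕ × ℕ ↦ m.choose p.1 * n.choose p.2) (by simp [h])]
  refine Finset.sum_le_sum_of_subset_of_nonneg ?_ fun _ _ _ ↦ Nat.zero_le _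
  intro p hp
  simp only [Finset.mem_insert, Finset.mem_singleton] at hp
  rcases hp with rfl | rfl <;> simp [add_comm]

theorem two_mul_mul_choose_mul_choose_mul_factorial_lt {j k : ℕ} (hj : 1 ≤ j) (hjk : j < k) :
    2 * k * ((k - 1).choose j * (k - 1).choose (j - 1) * (2 * k - 2 * j - 1)! * (2 * j - 1)!)
      < (2 * k - 1)! := by
  obtain ⟨n, rfl⟩ : ∃ n, k = n + 1 := ⟨k - 1, by omega⟩
  rw [n.add_sub_cancel]
  set P := n.choose j * n.choose (j - 1)
  set F := (2 * (n + 1) - 2 * j - 1)! * (2 * j - 1)!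
  have hP : 0 < P := Nat.mul_pos (Nat.choose_pos (by omega)) (Nat.choose_pos (by omega))
  have hF : 0 < F := Nat.mul_pos (Nat.factorial_pos _) (Nat.factorial_pos _)
  have vandermonde : 2 * P ≤ (2 * n).choose (2 * j - 1) := by
    have := Nat.choose_mul_choose_add_choose_mul_choose_le n n (r := j) (s := j - 1) (by omega)
    rwa [mul_comm (n.choose (j - 1)), ← two_mul, show j + (j - 1) = 2 * j - 1 by omega,
      ← two_mul] at this
  have factorial_split : (2 * (n + 1) - 1)! = (2 * n + 1) * ((2 * n).choose (2 * j - 1) * F) := by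
    have := Nat.choose_mul_factorial_mul_factorial (show 2 * j - 1 ≤ 2 * n by omega)
    rw [show 2 * n - (2 * j - 1) = 2 * (n + 1) - 2 * j - 1 by omega] at this
    rw [show 2 * (n + 1) - 1 = 2 * n + 1 by omega, Nat.factorial_succ, ← this]
    ring
  calc 2 * (n + 1) * (P * (2 * (n + 1) - 2 * j - 1)! * (2 * j - 1)!)
      = 2 * (n + 1) * P * F := by ring
    _ < (2 * n + 1) * (2 * P) * F := by
        have : 2 * (n + 1) * P < (2 * n + 1) * (2 * P) := by nlinarith
        exact Nat.mul_lt_mul_of_pos_right this hF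
    _ ≤ (2 * n + 1) * ((2 * n).choose (2 * j - 1) * F) := by
        rw [mul_assoc]
        gcongr
    _ = (2 * (n + 1) - 1)! := factorial_split.symm

theorem Real.sqrt_mul_mul_div_lt_half_mul_sqrt_div {x y a b : ℝ} (hx : 0 < x) (hy : 0 < y)
    (ha : 0 ≤ a) (h : 2 * y * a < b) :
    √(x * y) * a / b < 1 / 2 * √(x / y) := by
  have hb : 0 < b := by nlinarith
  have hs : 0 < √(x / y) := Real.sqrt_pos.mpr (div_pos hx hy)
  have hxy : √(x * y) = y * √(x / y) := by
    rw [show x * y = y ^ 2 * (x / y) by field_simp, Real.sqrt_mul (by positivity),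
      Real.sqrt_sq hy.le]
  rw [hxy, div_lt_iff₀ hb]
  nlinarith

/-- The correlation `corr(L_j,L_k) = √(jk) C(k-1,j) C(k-1,j-1) (2k-2j-1)!(2j-1)!/(2k-1)!`
is bounded by `(1/2)√(j/k)` for all `1 ≤ j < k`. -/
theorem correlation_bound (j k : ℕ) (hj : 1 ≤ j) (hjk : j < k) :
    Real.sqrt ((j : ℝ) * k) * ((k - 1).choose j : ℝ) * ((k - 1).choose (j - 1) : ℝ)
        * (Nat.factorial (2 * k - 2 * j - 1) : ℝ) * (Nat.factorial (2 * j - 1) : ℝ)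
        / (Nat.factorial (2 * k - 1) : ℝ)
      < (1 / 2) * Real.sqrt ((j : ℝ) / k) := by
  have key : 2 * (k : ℝ) * ((k - 1).choose j * (k - 1).choose (j - 1)
      * (2 * k - 2 * j - 1)! * (2 * j - 1)!) < (2 * k - 1)! := by
    exact_mod_cast two_mul_mul_choose_mul_choose_mul_factorial_lt hj hjk
  calc _ = Real.sqrt ((j : ℝ) * k) * (((k - 1).choose j : ℝ) * (k - 1).choose (j - 1)
        * (2 * k - 2 * j - 1)! * (2 * j - 1)!) / (2 * k - 1)! := by ring
    _ < _ := Real.sqrt_mul_mul_div_lt_half_mul_sqrt_div (Nat.cast_pos.mpr hj)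
        (Nat.cast_pos.mpr (by omega)) (by positivity) key
end
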